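/- arXiv:1810.07793 — 4 statements merged into one kernel-verified Lean document; each statement's English description precedes it below -/
import Mathlib

section
/- Let (X,d) be a compact metric space with diam(X) < D, let ε > 0, and let α, β be fully supported Borel probability measures on X each satisfying the Λ-doubling condition for some Λ > 0. Then for every x ∈ X, d_{W,1}(m_α^{(ε)}(x), m_β^{(ε)}(x)) ≤ (1+2ε) · Φ_{Λ,D,ε}(√(d_{W,1}(α,β))); i.e., the supremum over x ∈ X of the left-hand side is bounded by the right-hand side. -/
/-!
Fix `x`, write `B = closedBall x ε` and assume `β B ≤ α B` (the other case is symmetric, as the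
Wasserstein distance is). For `δ² > W(α, β)` take a coupling `π` of `α` and `β` of cost `< δ²`;
by Markov's inequality it moves mass at most `δ` over distances `≥ δ`. The part of `π` on pairs in
`B × B` at distance `< δ`, rescaled by `(α B)⁻¹`, is a partial transport plan between the two
truncations of cost at most `δ`; completing it by the product of the leftover marginals costs at
most `diam B ≤ 2ε` per unit of leftover mass. A point of `B` is either matched inside `B`, or moved
by at least `δ`, or matched into the annulus `closedBall x (ε + δ) \ B`, so the leftover mass is at
most `(δ + β (closedBall x (ε + δ)) - β B) / α B`. Doubling bounds the annulus by
`((1 + δ/ε)^Λ - 1) β B` and bounds `α B` below by `ψ_{Λ,D}(ε)`, which gives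
`(1 + 2ε) Φ_{Λ,D,ε}(δ)`; finally let `δ ↓ √W(α, β)`.
-/

open MeasureTheory Metric Set Filter

/-- The ℓ¹-Wasserstein distance: infimum over couplings of the expected distance. -/
noncomputable def wassersteinDist {X : Type*} [MeasurableSpace X] [PseudoMetricSpace X]
    (α β : Measure X) : ℝ :=
  sInf ((fun μ : Measure (X × X) => ∫ p, dist p.1 p.2 ∂μ) ''
    {μ : Measure (X × X) | μ.map Prod.fst = α ∧ μ.map Prod.snd = β})

/-- The (one-sided) Prokhorov distance between Borel probability measures. -/
noncomputable def prokhorovDist {X : Type*} [MeasurableSpace X] [PseudoMetricSpace X]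
    (α β : Measure X) : ℝ :=
  sInf {δ : ℝ | 0 < δ ∧ ∀ A : Set X, α A ≤ β (thickening δ A) + ENNReal.ofReal δ}

/-- ε-local truncation of α at x: restrict to the closed ε-ball and renormalize. -/
noncomputable def localTrunc {X : Type*} [MeasurableSpace X] [PseudoMetricSpace X]
    (α : Measure X) (ε : ℝ) (x : X) : Measure X :=
  (α (closedBall x ε))⁻¹ • α.restrict (closedBall x ε)

/-- The support of a measure: points all of whose neighborhoods have positive measure. -/
def msupport {X : Type*} [TopologicalSpace X] [MeasurableSpace X] (μ : Measure X) : Set X :=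
  {x : X | ∀ U ∈ nhds x, 0 < μ U}

/-- The Λ-doubling condition for a Borel measure: for points in the support,
`α (closedBall x r₁) / α (closedBall x r₂) ≤ (r₁/r₂)^Λ` whenever `r₁ ≥ r₂ > 0`. -/
def DoublingCond {X : Type*} [MeasurableSpace X] [PseudoMetricSpace X]
    (α : Measure X) (Λ : ℝ) : Prop :=
  ∀ x ∈ msupport α, ∀ r₁ r₂ : ℝ, r₂ ≤ r₁ → 0 < r₂ →
    α (closedBall x r₁) / α (closedBall x r₂) ≤ ENNReal.ofReal ((r₁ / r₂) ^ Λ)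

/-- `ψ_{Λ,D}(r) = min(1, (r/D)^Λ)`. -/
noncomputable def psiLD (Λ D r : ℝ) : ℝ := min 1 ((r / D) ^ Λ)

/-- `Φ_{Λ,D,ε}(η) = η/ψ_{Λ,D}(ε) + ((1+η/ε)^Λ − 1)`. -/
noncomputable def PhiLDE (Λ D ε η : ℝ) : ℝ := η / psiLD Λ D ε + ((1 + η / ε) ^ Λ - 1)
section Coupling

variable {X : Type*} [MeasurableSpace X]

lemma exists_map_fst_eq_map_snd_eq {ρ₁ ρ₂ : Measure X} [IsFiniteMeasure ρ₁]
    (h : ρ₁ univ = ρ₂ univ) :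
    ∃ γ : Measure (X × X), γ.map Prod.fst = ρ₁ ∧ γ.map Prod.snd = ρ₂ := by
  have : IsFiniteMeasure ρ₂ := ⟨h ▸ measure_lt_top ρ₁ univ⟩
  rcases eq_or_ne (ρ₁ univ) 0 with h0 | h0
  · refine ⟨0, ?_, ?_⟩
    · rw [Measure.map_zero, eq_comm, ← Measure.measure_univ_eq_zero, h0]
    · rw [Measure.map_zero, eq_comm, ← Measure.measure_univ_eq_zero, ← h, h0]
  · have hcancel : (ρ₁ univ)⁻¹ * ρ₁ univ = 1 := ENNReal.inv_mul_cancel h0 (measure_ne_top _ _)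
    refine ⟨(ρ₁ univ)⁻¹ • ρ₁.prod ρ₂, ?_, ?_⟩
    · rw [Measure.map_smul, Measure.map_fst_prod, ← h, smul_smul, hcancel, one_smul]
    · rw [Measure.map_smul, Measure.map_snd_prod, smul_smul, hcancel, one_smul]

lemma map_restrict_le_restrict_map {Y : Type*} [MeasurableSpace Y] {μ : Measure X}
    {f : X → Y} (hf : Measurable f) {S : Set X} {B : Set Y} (hB : MeasurableSet B)
    (hS : S ⊆ f ⁻¹' B) : (μ.restrict S).map f ≤ (μ.map f).restrict B := by
  rw [Measure.restrict_map hf hB]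
  exact Measure.map_mono (Measure.restrict_mono hS le_rfl) hf

end Coupling

section Wasserstein

variable {X : Type*} [PseudoMetricSpace X] [MeasurableSpace X]

lemma wassersteinDist_le_integral {α β : Measure X} {π : Measure (X × X)}
    (h₁ : π.map Prod.fst = α) (h₂ : π.map Prod.snd = β) :
    wassersteinDist α β ≤ ∫ p, dist p.1 p.2 ∂π :=
  csInf_le ⟨0, by rintro _ ⟨μ, -, rfl⟩; exact integral_nonneg fun p => dist_nonneg⟩
    ⟨π, ⟨h₁, h₂⟩, rfl⟩

lemma exists_integral_dist_lt_of_wassersteinDist_lt {α β : Measure X}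
    [IsProbabilityMeasure α] [IsProbabilityMeasure β] {c : ℝ} (h : wassersteinDist α β < c) :
    ∃ π : Measure (X × X), π.map Prod.fst = α ∧ π.map Prod.snd = β ∧
      ∫ p, dist p.1 p.2 ∂π < c := by
  unfold wassersteinDist at h
  obtain ⟨_, ⟨π, ⟨h₁, h₂⟩, rfl⟩, hlt⟩ :=
    exists_lt_of_csInf_lt (by exact .image _ ⟨α.prod β, by simp, by simp⟩) h
  exact ⟨π, h₁, h₂, hlt⟩

lemma wassersteinDist_comm (α β : Measure X) : wassersteinDist α β = wassersteinDist β α := by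
  have hsub : ∀ μ ν : Measure X,
      (fun π : Measure (X × X) => ∫ p, dist p.1 p.2 ∂π) ''
          {π | π.map Prod.fst = μ ∧ π.map Prod.snd = ν} ⊆
        (fun π : Measure (X × X) => ∫ p, dist p.1 p.2 ∂π) ''
          {π | π.map Prod.fst = ν ∧ π.map Prod.snd = μ} := by
    rintro μ ν _ ⟨π, ⟨h₁, h₂⟩, rfl⟩
    refine ⟨π.map Prod.swap, ⟨?_, ?_⟩, ?_⟩
    · rwa [Measure.map_map measurable_fst measurable_swap]
    · rwa [Measure.map_map measurable_snd measurable_swap]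
    · exact (integral_map_equiv MeasurableEquiv.prodComm fun p : X × X => dist p.1 p.2).trans
        (by congr 1; ext p; exact dist_comm _ _)
  exact congrArg sInf (subset_antisymm (hsub α β) (hsub β α))

end Wasserstein

section LocalTruncation

variable {X : Type*} [PseudoMetricSpace X] [MeasurableSpace X]

lemma measure_closedBall_pos {μ : Measure X} {x : X} (hx : x ∈ msupport μ) {r : ℝ}
    (hr : 0 < r) : 0 < μ (closedBall x r) :=
  hx _ (closedBall_mem_nhds x hr)

lemma isProbabilityMeasure_localTrunc {μ : Measure X} [IsFiniteMeasure μ] {ε : ℝ} {x : X}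
    (h : μ (closedBall x ε) ≠ 0) : IsProbabilityMeasure (localTrunc μ ε x) :=
  ⟨by rw [localTrunc, Measure.smul_apply, Measure.restrict_apply_univ, smul_eq_mul,
    ENNReal.inv_mul_cancel h (measure_ne_top _ _)]⟩

lemma map_smul_restrict_le_localTrunc [OpensMeasurableSpace X] {μ : Measure X} {ε : ℝ} {x : X}
    {π : Measure (X × X)} {f : X × X → X} (hf : Measurable f) (hπ : π.map f = μ)
    {S : Set (X × X)} (hS : S ⊆ f ⁻¹' closedBall x ε) {c : ENNReal}
    (hc : c ≤ (μ (closedBall x ε))⁻¹) : (c • π.restrict S).map f ≤ localTrunc μ ε x := by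
  rw [Measure.map_smul, localTrunc]
  gcongr
  exact hπ ▸ map_restrict_le_restrict_map hf measurableSet_closedBall hS

lemma ae_mem_closedBall_localTrunc [OpensMeasurableSpace X] (μ : Measure X) (ε : ℝ) (x : X) :
    ∀ᵐ y ∂localTrunc μ ε x, y ∈ closedBall x ε :=
  Measure.ae_smul_measure (ae_restrict_mem measurableSet_closedBall) _

lemma DoublingCond.measureReal_closedBall_le {μ : Measure X} [IsFiniteMeasure μ] {Λ : ℝ}
    (hμ : DoublingCond μ Λ) {x : X} (hx : x ∈ msupport μ) {r₁ r₂ : ℝ} (h : r₂ ≤ r₁)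
    (hr₂ : 0 < r₂) : μ.real (closedBall x r₁) ≤ (r₁ / r₂) ^ Λ * μ.real (closedBall x r₂) := by
  have hle := hμ x hx r₁ r₂ h hr₂
  rw [ENNReal.div_le_iff (measure_closedBall_pos hx hr₂).ne' (measure_ne_top _ _)] at hle
  simpa [measureReal_def, ENNReal.toReal_mul, Real.rpow_nonneg (div_nonneg (hr₂.le.trans h) hr₂.le)]
    using ENNReal.toReal_mono (by finiteness) hle

lemma measureReal_closedBall_eq_one [CompactSpace X] {μ : Measure X} [IsProbabilityMeasure μ]
    (x : X) {r : ℝ} (hr : diam (univ : Set X) ≤ r) : μ.real (closedBall x r) = 1 := by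
  rw [show closedBall x r = univ from eq_univ_of_forall fun y =>
    (dist_le_diam_of_mem isBounded_of_compactSpace (mem_univ y) (mem_univ x)).trans hr]
  exact probReal_univ

lemma psiLD_le_measureReal_closedBall [CompactSpace X] {μ : Measure X} [IsProbabilityMeasure μ]
    {Λ D ε : ℝ} (hD : diam (univ : Set X) < D) (hε : 0 < ε) (hμ : DoublingCond μ Λ) {x : X}
    (hx : x ∈ msupport μ) : psiLD Λ D ε ≤ μ.real (closedBall x ε) := by
  rcases le_or_gt D ε with hDε | hεD
  · rw [measureReal_closedBall_eq_one x (hD.le.trans hDε)]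
    exact min_le_left _ _
  · have hdoubling := hμ.measureReal_closedBall_le hx hεD.le hε
    rw [measureReal_closedBall_eq_one x hD.le] at hdoubling
    have hDε : 0 < D / ε := div_pos (hε.trans hεD) hε
    refine (min_le_right _ _).trans ?_
    rwa [← div_le_iff₀' (by positivity), one_div, ← Real.inv_rpow hDε.le, inv_div]
      at hdoubling

lemma measureReal_closedBall_le_of_coupling [OpensMeasurableSpace X] {α β : Measure X}
    [IsFiniteMeasure β] {π : Measure (X × X)} [IsFiniteMeasure π] (h₁ : π.map Prod.fst = α)
    (h₂ : π.map Prod.snd = β) (x : X) {ε δ : ℝ} (hδ : 0 ≤ δ) :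
    α.real (closedBall x ε) ≤
      π.real (closedBall x ε ×ˢ closedBall x ε ∩ {p | dist p.1 p.2 < δ}) +
        π.real {p | δ ≤ dist p.1 p.2} +
        (β.real (closedBall x (ε + δ)) - β.real (closedBall x ε)) := by
  have hcover : Prod.fst ⁻¹' closedBall x ε ⊆
      (closedBall x ε ×ˢ closedBall x ε ∩ {p | dist p.1 p.2 < δ} ∪ {p | δ ≤ dist p.1 p.2}) ∪
        Prod.snd ⁻¹' (closedBall x (ε + δ) \ closedBall x ε) := by
    intro p hp
    rcases lt_or_ge (dist p.1 p.2) δ with hnear | hfar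
    · by_cases hp₂ : p.2 ∈ closedBall x ε
      · exact .inl (.inl ⟨⟨hp, hp₂⟩, hnear⟩)
      · refine .inr ⟨mem_closedBall.2 ((dist_triangle_left p.2 x p.1).trans ?_), hp₂⟩
        linarith [mem_closedBall.1 hp]
    · exact .inl (.inr hfar)
  rw [← measureReal_sdiff (closedBall_subset_closedBall (by linarith)) measurableSet_closedBall,
    ← h₁, ← h₂, map_measureReal_apply measurable_fst measurableSet_closedBall,
    map_measureReal_apply measurable_snd (measurableSet_closedBall.diff measurableSet_closedBall)]
  refine (measureReal_mono hcover).trans ((measureReal_union_le _ _).trans ?_)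
  gcongr
  exact measureReal_union_le _ _

end LocalTruncation

lemma continuous_PhiLDE {Λ : ℝ} (hΛ : 0 ≤ Λ) (D ε : ℝ) : Continuous (PhiLDE Λ D ε) :=
  (continuous_id.div_const _).add
    (((continuous_const.add (continuous_id.div_const _)).rpow_const fun _ => .inr hΛ).sub
      continuous_const)

section Compact

variable {X : Type*} [PseudoMetricSpace X] [CompactSpace X] [MeasurableSpace X] [BorelSpace X]

lemma integrable_dist (γ : Measure (X × X)) [IsFiniteMeasure γ] :
    Integrable (fun p : X × X => dist p.1 p.2) γ :=
  (BoundedContinuousFunction.mkOfCompact ⟨_, continuous_fst.dist continuous_snd⟩).integrable γ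

lemma integral_dist_le_of_ae_le {γ : Measure (X × X)} [IsFiniteMeasure γ] {L : ℝ}
    (h : ∀ᵐ p ∂γ, dist p.1 p.2 ≤ L) : ∫ p, dist p.1 p.2 ∂γ ≤ L * γ.real univ := by
  simpa [mul_comm] using integral_mono_ae (integrable_dist γ) (integrable_const L) h

lemma measureReal_dist_ge_le_of_integral_lt {π : Measure (X × X)} [IsFiniteMeasure π] {δ : ℝ}
    (hδ : 0 < δ) (h : ∫ p, dist p.1 p.2 ∂π < δ ^ 2) : π.real {p | δ ≤ dist p.1 p.2} ≤ δ := by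
  have := mul_meas_ge_le_integral_of_nonneg (ae_of_all _ fun p => dist_nonneg)
    (integrable_dist π) δ
  nlinarith

lemma wassersteinDist_le_integral_add_diam_mul {μ ν : Measure X} [IsProbabilityMeasure μ]
    [IsProbabilityMeasure ν] {B : Set X} (hμ : ∀ᵐ x ∂μ, x ∈ B) (hν : ∀ᵐ x ∂ν, x ∈ B)
    {τ : Measure (X × X)} (h₁ : τ.map Prod.fst ≤ μ) (h₂ : τ.map Prod.snd ≤ ν) :
    wassersteinDist μ ν ≤ ∫ p, dist p.1 p.2 ∂τ + diam B * (1 - τ.real univ) := by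
  have hτ₁ : τ.map Prod.fst univ = τ univ := by
    rw [Measure.map_apply measurable_fst .univ, preimage_univ]
  have hτ₂ : τ.map Prod.snd univ = τ univ := by
    rw [Measure.map_apply measurable_snd .univ, preimage_univ]
  have : IsFiniteMeasure τ := ⟨hτ₁ ▸ (h₁ univ).trans_lt (measure_lt_top μ univ)⟩
  obtain ⟨γ, hγ₁, hγ₂⟩ := exists_map_fst_eq_map_snd_eq (ρ₁ := μ - τ.map Prod.fst)
    (ρ₂ := ν - τ.map Prod.snd) (by simp [Measure.sub_apply .univ h₁, Measure.sub_apply .univ h₂,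
      hτ₁, hτ₂])
  have : IsFiniteMeasure γ := by
    rw [← Measure.isFiniteMeasure_map_iff measurable_fst.aemeasurable, hγ₁]
    infer_instance
  have hγ_univ : γ.real univ = 1 - τ.real univ := by
    have hτ : τ univ ≤ 1 := hτ₁ ▸ (h₁ univ).trans_eq measure_univ
    rw [← preimage_univ (f := Prod.fst), ← map_measureReal_apply measurable_fst .univ, hγ₁,
      measureReal_def, Measure.sub_apply .univ h₁, hτ₁, measure_univ,
      ENNReal.toReal_sub_of_le hτ ENNReal.one_ne_top, measureReal_def, ENNReal.toReal_one,
      preimage_univ]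
  have hγB : ∀ᵐ p ∂γ, dist p.1 p.2 ≤ diam B := by
    have hB₁ : ∀ᵐ p ∂γ, p.1 ∈ B := ae_of_ae_map measurable_fst.aemeasurable
      (hγ₁ ▸ ae_mono Measure.sub_le hμ)
    have hB₂ : ∀ᵐ p ∂γ, p.2 ∈ B := ae_of_ae_map measurable_snd.aemeasurable
      (hγ₂ ▸ ae_mono Measure.sub_le hν)
    filter_upwards [hB₁, hB₂] with p hp₁ hp₂
    exact dist_le_diam_of_mem isBounded_of_compactSpace hp₁ hp₂
  have hcoupling₁ : (τ + γ).map Prod.fst = μ := by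
    rw [Measure.map_add _ _ measurable_fst, hγ₁, add_comm, Measure.sub_add_cancel_of_le h₁]
  have hcoupling₂ : (τ + γ).map Prod.snd = ν := by
    rw [Measure.map_add _ _ measurable_snd, hγ₂, add_comm, Measure.sub_add_cancel_of_le h₂]
  calc wassersteinDist μ ν ≤ ∫ p, dist p.1 p.2 ∂(τ + γ) :=
        wassersteinDist_le_integral hcoupling₁ hcoupling₂
    _ = ∫ p, dist p.1 p.2 ∂τ + ∫ p, dist p.1 p.2 ∂γ :=
        integral_add_measure (integrable_dist τ) (integrable_dist γ)
    _ ≤ ∫ p, dist p.1 p.2 ∂τ + diam B * (1 - τ.real univ) := by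
        rw [← hγ_univ]
        gcongr
        exact integral_dist_le_of_ae_le hγB

theorem wassersteinDist_localTrunc_le_of_coupling {α β : Measure X} [IsProbabilityMeasure α]
    [IsProbabilityMeasure β] {π : Measure (X × X)} [IsFiniteMeasure π] (h₁ : π.map Prod.fst = α)
    (h₂ : π.map Prod.snd = β) {x : X} {ε δ R : ℝ} (hε : 0 ≤ ε) (hδ : 0 ≤ δ)
    (hfar : π.real {p | δ ≤ dist p.1 p.2} ≤ δ) (hβ : 0 < β.real (closedBall x ε))
    (hβα : β.real (closedBall x ε) ≤ α.real (closedBall x ε)) (hR : 1 ≤ R)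
    (hdoubling : β.real (closedBall x (ε + δ)) ≤ R * β.real (closedBall x ε)) :
    wassersteinDist (localTrunc α ε x) (localTrunc β ε x) ≤
      δ + 2 * ε * (δ / α.real (closedBall x ε) + (R - 1)) := by
  set B := closedBall x ε
  set a := α.real B
  have ha : 0 < a := hβ.trans_le hβα
  have hαB : α B ≠ 0 := fun h => ha.ne' (by simp [a, measureReal_def, h])
  have hβB : β B ≠ 0 := fun h => hβ.ne' (by simp [measureReal_def, h])
  have := isProbabilityMeasure_localTrunc hαB
  have := isProbabilityMeasure_localTrunc hβB
  set S := B ×ˢ B ∩ {p : X × X | dist p.1 p.2 < δ}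
  have hS : MeasurableSet S := (measurableSet_closedBall.prod measurableSet_closedBall).inter
    (measurableSet_lt (measurable_fst.dist measurable_snd) measurable_const)
  set τ := (α B)⁻¹ • π.restrict S
  have : IsFiniteMeasure τ := Measure.smul_finite _ (ENNReal.inv_ne_top.2 hαB)
  have hτ₁ : τ.map Prod.fst ≤ localTrunc α ε x :=
    map_smul_restrict_le_localTrunc measurable_fst h₁ (fun p hp => hp.1.1) le_rfl
  have hτ₂ : τ.map Prod.snd ≤ localTrunc β ε x :=
    map_smul_restrict_le_localTrunc measurable_snd h₂ (fun p hp => hp.1.2) <| ENNReal.inv_le_inv.2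
      ((ENNReal.toReal_le_toReal (by finiteness) (by finiteness)).1 hβα)
  have hτ_cost : ∫ p, dist p.1 p.2 ∂τ ≤ δ * τ.real univ :=
    integral_dist_le_of_ae_le (Measure.ae_smul_measure
      ((ae_restrict_mem hS).mono fun p hp => hp.2.le) _)
  have hτ_univ : τ.real univ = π.real S / a := by
    simp [τ, a, measureReal_def, ENNReal.toReal_inv, div_eq_inv_mul]
  have hSa : π.real S ≤ a := by
    show π.real S ≤ α.real B
    rw [← h₁, map_measureReal_apply measurable_fst measurableSet_closedBall]
    exact measureReal_mono fun p hp => hp.1.1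
  have hleftover : 1 - τ.real univ ≤ δ / a + (R - 1) := by
    have hmass := measureReal_closedBall_le_of_coupling h₁ h₂ x (ε := ε) hδ
    rw [hτ_univ, ← sub_nonneg]
    have : δ / a + (R - 1) - (1 - π.real S / a) = (δ + (R - 1) * a - (a - π.real S)) / a := by
      field_simp
    rw [this]
    exact div_nonneg (by nlinarith) ha.le
  have hleftover_nonneg : 0 ≤ 1 - τ.real univ := by
    rw [hτ_univ, sub_nonneg]; exact div_le_one_of_le₀ hSa ha.le
  calc wassersteinDist (localTrunc α ε x) (localTrunc β ε x)
      ≤ ∫ p, dist p.1 p.2 ∂τ + diam B * (1 - τ.real univ) :=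
        wassersteinDist_le_integral_add_diam_mul (ae_mem_closedBall_localTrunc α ε x)
          (ae_mem_closedBall_localTrunc β ε x) hτ₁ hτ₂
    _ ≤ δ * 1 + 2 * ε * (δ / a + (R - 1)) := by
        gcongr
        · exact hτ_cost.trans (by gcongr; linarith)
        · exact diam_closedBall hε
    _ = δ + 2 * ε * (δ / a + (R - 1)) := by rw [mul_one]

theorem wassersteinDist_localTrunc_le_mul_PhiLDE {α β : Measure X} [IsProbabilityMeasure α]
    [IsProbabilityMeasure β] {Λ D ε δ : ℝ} (hD : diam (univ : Set X) < D) (hΛ : 0 ≤ Λ)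
    (hε : 0 < ε) (hδ : 0 < δ) (hW : wassersteinDist α β < δ ^ 2) (hα : DoublingCond α Λ)
    (hβ : DoublingCond β Λ) {x : X} (hαx : x ∈ msupport α) (hβx : x ∈ msupport β)
    (hβα : β.real (closedBall x ε) ≤ α.real (closedBall x ε)) :
    wassersteinDist (localTrunc α ε x) (localTrunc β ε x) ≤ (1 + 2 * ε) * PhiLDE Λ D ε δ := by
  obtain ⟨π, h₁, h₂, hπ⟩ := exists_integral_dist_lt_of_wassersteinDist_lt hW
  have : IsProbabilityMeasure π := by
    have : IsProbabilityMeasure (π.map Prod.fst) := h₁ ▸ inferInstance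
    exact Measure.isProbabilityMeasure_of_map Prod.fst
  have hψ := psiLD_le_measureReal_closedBall hD hε hα hαx
  have hψpos : 0 < psiLD Λ D ε :=
    lt_min one_pos (Real.rpow_pos_of_pos (div_pos hε (diam_nonneg.trans_lt hD)) _)
  have hR : 1 ≤ (1 + δ / ε) ^ Λ := Real.one_le_rpow (by linarith [div_pos hδ hε]) hΛ
  have hdoubling := hβ.measureReal_closedBall_le hβx (le_add_of_nonneg_right hδ.le) hε
  rw [add_div, div_self hε.ne'] at hdoubling
  have hβB : 0 < β.real (closedBall x ε) :=
    ENNReal.toReal_pos (measure_closedBall_pos hβx hε).ne' (measure_ne_top _ _)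
  refine (wassersteinDist_localTrunc_le_of_coupling h₁ h₂ hε.le hδ.le
    (measureReal_dist_ge_le_of_integral_lt hδ hπ) hβB hβα hR hdoubling).trans ?_
  have hδψ : δ ≤ δ / psiLD Λ D ε := le_div_self hδ.le hψpos (min_le_left _ _)
  have hδα : δ / α.real (closedBall x ε) ≤ δ / psiLD Λ D ε :=
    div_le_div_of_nonneg_left hδ.le hψpos hψ
  unfold PhiLDE
  nlinarith

end Compact

/-- **Stability of local truncations** (Theorem 3 of the paper).
For a compact metric space with diam < D and fully supported Λ-doubling Borel
probability measures α, β, every localized pair is close in Wasserstein distance: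
`d_{W,1}(m_α^{(ε)}(x), m_β^{(ε)}(x)) ≤ (1+2ε) Φ_{Λ,D,ε}(√(d_{W,1}(α,β)))` for all x. -/
theorem stability_of_local_truncations
    {X : Type*} [MetricSpace X] [CompactSpace X] [MeasurableSpace X] [BorelSpace X]
    (D Λ ε : ℝ) (hD : Metric.diam (Set.univ : Set X) < D) (hΛ : 0 < Λ) (hε : 0 < ε)
    (α β : Measure X) [IsProbabilityMeasure α] [IsProbabilityMeasure β]
    (hαfull : msupport α = Set.univ) (hβfull : msupport β = Set.univ)
    (hα : DoublingCond α Λ) (hβ : DoublingCond β Λ) :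
    ∀ x : X, wassersteinDist (localTrunc α ε x) (localTrunc β ε x) ≤
      (1 + 2 * ε) * PhiLDE Λ D ε (Real.sqrt (wassersteinDist α β)) := by
  intro x
  have hαx : x ∈ msupport α := hαfull ▸ mem_univ x
  have hβx : x ∈ msupport β := hβfull ▸ mem_univ x
  have hbound : ∀ δ > Real.sqrt (wassersteinDist α β),
      wassersteinDist (localTrunc α ε x) (localTrunc β ε x) ≤ (1 + 2 * ε) * PhiLDE Λ D ε δ := by
    intro δ hδ
    have hδpos : 0 < δ := (Real.sqrt_nonneg _).trans_lt hδ
    have hW := (Real.sqrt_lt' hδpos).1 hδ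
    rcases le_total (β.real (closedBall x ε)) (α.real (closedBall x ε)) with hβα | hαβ
    · exact wassersteinDist_localTrunc_le_mul_PhiLDE hD hΛ.le hε hδpos hW hα hβ hαx hβx hβα
    · rw [wassersteinDist_comm] at hW ⊢
      exact wassersteinDist_localTrunc_le_mul_PhiLDE hD hΛ.le hε hδpos hW hβ hα hβx hαx hαβ
  have hlim := ((continuous_PhiLDE hΛ.le D ε).const_mul (1 + 2 * ε)).tendsto
    (Real.sqrt (wassersteinDist α β))
  exact ge_of_tendsto (hlim.mono_left nhdsWithin_le_nhds)
    (eventually_nhdsWithin_of_forall (s := Ioi _) hbound)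
end

section
/- Let X be a compact subset of ℝⁿ with the Euclidean metric, with diam(X) < D, let ε > 0, and let α, β be fully supported Borel probability measures on X each satisfying the Λ-doubling condition for some Λ > 0. Then for every x ∈ X, ‖mean(m_α^{(ε)}(x)) − mean(m_β^{(ε)}(x))‖ ≤ (1+2ε) · Φ_{Λ,D,ε}(√(d_{W,1}(α,β))), where mean(μ) = ∫ y dμ(y) is the barycenter of μ. -/
open MeasureTheory Metric Set Filter

/-! Couple `α` and `β` by a transport plan `μ` of cost `W` and let `B = closedBall x ε`. Up to
the normalisations `α(B)` and `β(B)`, the two truncated means are integrals of the first and the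
second coordinate against `μ` over `B × univ` and `univ × B`. On `B × B` the two integrands differ
by at most the transport cost, and the remaining mass `μ(B × Bᶜ)` consists of pairs moved farther
than `η` (mass at most `W/η` by Markov) or landing in the annulus `closedBall x (ε + η) \ B`,
which the doubling condition makes small. Dividing by `α(B) ≥ ψ_{Λ,D}(ε)` and letting `η`
decrease to `√W` gives the bound when `√W ≤ 1`; otherwise the trivial bound `2ε` suffices. -/

/-- Since `q ≤ p`, the normalisation mismatch `(q⁻¹ - p⁻¹) • S₂ + q⁻¹ • R₂` has norm at most
`ε (1 - s / p) = ε r₁ / p`: this is the second `ε r₁`. -/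
lemma norm_inv_smul_sub_inv_smul_le {E : Type*} [NormedAddCommGroup E] [NormedSpace ℝ E]
    {S₁ S₂ R₁ R₂ : E} {p q s r₁ r₂ W ε : ℝ} (hp : p = s + r₁) (hq : q = s + r₂)
    (hq0 : 0 < q) (hqp : q ≤ p) (hS : ‖S₁ - S₂‖ ≤ W) (hS₂ : ‖S₂‖ ≤ ε * s)
    (hR₁ : ‖R₁‖ ≤ ε * r₁) (hR₂ : ‖R₂‖ ≤ ε * r₂) :
    ‖p⁻¹ • (S₁ + R₁) - q⁻¹ • (S₂ + R₂)‖ ≤ (W + 2 * ε * r₁) / p := by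
  have hp0 : 0 < p := hq0.trans_le hqp
  have hpq : 0 ≤ q⁻¹ - p⁻¹ := sub_nonneg.2 (inv_anti₀ hq0 hqp)
  have hsplit : p⁻¹ • (S₁ + R₁) - q⁻¹ • (S₂ + R₂)
      = p⁻¹ • (S₁ - S₂) + p⁻¹ • R₁ - ((q⁻¹ - p⁻¹) • S₂ + q⁻¹ • R₂) := by module
  calc ‖p⁻¹ • (S₁ + R₁) - q⁻¹ • (S₂ + R₂)‖
      ≤ ‖p⁻¹ • (S₁ - S₂)‖ + ‖p⁻¹ • R₁‖ + (‖(q⁻¹ - p⁻¹) • S₂‖ + ‖q⁻¹ • R₂‖) := by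
        rw [hsplit]
        exact (norm_sub_le _ _).trans (add_le_add (norm_add_le _ _) (norm_add_le _ _))
    _ ≤ p⁻¹ * W + p⁻¹ * (ε * r₁) + ((q⁻¹ - p⁻¹) * (ε * s) + q⁻¹ * (ε * r₂)) := by
        simp only [norm_smul, Real.norm_of_nonneg hpq, Real.norm_of_nonneg (inv_nonneg.2 hp0.le),
          Real.norm_of_nonneg (inv_nonneg.2 hq0.le)]
        gcongr
    _ = (W + 2 * ε * r₁) / p := by
        subst hp hq
        field_simp
        ring

lemma LipschitzWith.norm_sub_le_of_mem_closedBall {Y E : Type*} [PseudoMetricSpace Y]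
    [SeminormedAddCommGroup E] {u : Y → E} (hu : LipschitzWith 1 u) {x y : Y} {ε : ℝ}
    (hy : y ∈ closedBall x ε) : ‖u y - u x‖ ≤ ε := by
  simpa [dist_eq_norm] using (hu.dist_le_mul y x).trans (by simpa using mem_closedBall.1 hy)

lemma wassersteinDist_nonneg {Y : Type*} [PseudoMetricSpace Y] [MeasurableSpace Y]
    (α β : Measure Y) : 0 ≤ wassersteinDist α β :=
  Real.sInf_nonneg (by rintro _ ⟨μ, -, rfl⟩; exact integral_nonneg fun _ => dist_nonneg)

lemma le_wassersteinDist {Y : Type*} [PseudoMetricSpace Y] [MeasurableSpace Y]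
    {α β : Measure Y} [IsProbabilityMeasure α] [IsProbabilityMeasure β] {c : ℝ}
    (h : ∀ μ : Measure (Y × Y), μ.map Prod.fst = α → μ.map Prod.snd = β →
      c ≤ ∫ w, dist w.1 w.2 ∂μ) :
    c ≤ wassersteinDist α β := by
  refine le_csInf ⟨_, α.prod β, ⟨?_, ?_⟩, rfl⟩ ?_
  · simp [Measure.map_fst_prod]
  · simp [Measure.map_snd_prod]
  · rintro _ ⟨μ, ⟨hμα, hμβ⟩, rfl⟩
    exact h μ hμα hμβ

lemma integrable_of_continuous_of_compactSpace {Z E : Type*} [TopologicalSpace Z]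
    [CompactSpace Z] [MeasurableSpace Z] [OpensMeasurableSpace Z] [NormedAddCommGroup E]
    {ν : Measure Z} [IsFiniteMeasure ν] {g : Z → E} (hg : Continuous g) : Integrable g ν :=
  hg.integrable_of_hasCompactSupport (HasCompactSupport.of_compactSpace g)

lemma integral_localTrunc {Y E : Type*} [PseudoMetricSpace Y] [MeasurableSpace Y]
    [NormedAddCommGroup E] [NormedSpace ℝ E] (α : Measure Y) (ε : ℝ) (x : Y) (g : Y → E) :
    ∫ y, g y ∂localTrunc α ε x = (α.real (closedBall x ε))⁻¹ • ∫ y in closedBall x ε, g y ∂α := by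
  rw [localTrunc, integral_smul_measure, ENNReal.toReal_inv, measureReal_def]

section Coupling

variable {Y E : Type*} [PseudoMetricSpace Y] [CompactSpace Y] [MeasurableSpace Y] [BorelSpace Y]
  [NormedAddCommGroup E] [NormedSpace ℝ E] {α β : Measure Y} {μ : Measure (Y × Y)}

lemma norm_inv_smul_setIntegral_sub_le_of_coupling [IsProbabilityMeasure α]
    (hμα : μ.map Prod.fst = α) (hμβ : μ.map Prod.snd = β) {f : Y → E} (hf : LipschitzWith 1 f)
    {B : Set Y} (hB : MeasurableSet B) {ε : ℝ} (hfB : ∀ y ∈ B, ‖f y‖ ≤ ε)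
    (hq0 : 0 < β.real B) (hqp : β.real B ≤ α.real B) :
    ‖(α.real B)⁻¹ • ∫ y in B, f y ∂α - (β.real B)⁻¹ • ∫ y in B, f y ∂β‖ ≤
      (∫ w, dist w.1 w.2 ∂μ + 2 * ε * μ.real (B ×ˢ Bᶜ)) / α.real B := by
  have : IsProbabilityMeasure μ := by
    subst hμα
    exact Measure.isProbabilityMeasure_of_map Prod.fst
  have hfc := hf.continuous
  have hf₁ : Integrable (fun w : Y × Y => f w.1) μ :=
    integrable_of_continuous_of_compactSpace (by fun_prop)
  have hf₂ : Integrable (fun w : Y × Y => f w.2) μ :=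
    integrable_of_continuous_of_compactSpace (by fun_prop)
  have hdist : Integrable (fun w : Y × Y => dist w.1 w.2) μ :=
    integrable_of_continuous_of_compactSpace continuous_dist
  have hsnd : Prod.snd ⁻¹' B ∩ Prod.fst ⁻¹' B = B ×ˢ B ∧
      Prod.snd ⁻¹' B \ Prod.fst ⁻¹' B = Bᶜ ×ˢ B := by
    constructor <;> ext <;> simp [and_comm]
  have hα : ∫ y in B, f y ∂α = ∫ w in B ×ˢ B, f w.1 ∂μ + ∫ w in B ×ˢ Bᶜ, f w.1 ∂μ := by
    rw [← hμα, setIntegral_map hB hfc.aestronglyMeasurable measurable_fst.aemeasurable]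
    exact (integral_inter_add_sdiff (measurable_snd hB) hf₁.integrableOn).symm
  have hβ : ∫ y in B, f y ∂β = ∫ w in B ×ˢ B, f w.2 ∂μ + ∫ w in Bᶜ ×ˢ B, f w.2 ∂μ := by
    rw [← hμβ, setIntegral_map hB hfc.aestronglyMeasurable measurable_snd.aemeasurable,
      ← integral_inter_add_sdiff (measurable_fst hB) hf₂.integrableOn, hsnd.1, hsnd.2]
  have hp : α.real B = μ.real (B ×ˢ B) + μ.real (B ×ˢ Bᶜ) := by
    rw [← hμα, map_measureReal_apply measurable_fst hB]
    exact (measureReal_inter_add_sdiff (measurable_snd hB)).symm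
  have hq : β.real B = μ.real (B ×ˢ B) + μ.real (Bᶜ ×ˢ B) := by
    rw [← hμβ, map_measureReal_apply measurable_snd hB, ← measureReal_inter_add_sdiff
      (measurable_fst hB), hsnd.1, hsnd.2]
  rw [hα, hβ]
  refine norm_inv_smul_sub_inv_smul_le hp hq hq0 hqp ?_ ?_ ?_ ?_
  · rw [← integral_sub hf₁.integrableOn hf₂.integrableOn]
    calc ‖∫ w in B ×ˢ B, (f w.1 - f w.2) ∂μ‖ ≤ ∫ w in B ×ˢ B, dist w.1 w.2 ∂μ :=
          norm_integral_le_of_norm_le hdist.integrableOn (ae_of_all _ fun w => by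
            simpa [dist_eq_norm] using hf.dist_le_mul w.1 w.2)
      _ ≤ ∫ w, dist w.1 w.2 ∂μ := setIntegral_le_integral hdist (ae_of_all _ fun _ => dist_nonneg)
  · exact norm_setIntegral_le_of_norm_le_const (measure_lt_top _ _) fun w hw => hfB _ hw.2
  · exact norm_setIntegral_le_of_norm_le_const (measure_lt_top _ _) fun w hw => hfB _ hw.1
  · exact norm_setIntegral_le_of_norm_le_const (measure_lt_top _ _) fun w hw => hfB _ hw.2

lemma measureReal_closedBall_prod_compl_le [IsFiniteMeasure μ] [IsFiniteMeasure β]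
    (hμβ : μ.map Prod.snd = β) (x : Y) {ε η : ℝ} (hη : 0 < η) :
    μ.real (closedBall x ε ×ˢ (closedBall x ε)ᶜ) ≤
      (∫ w, dist w.1 w.2 ∂μ) / η + (β.real (closedBall x (ε + η)) - β.real (closedBall x ε)) := by
  have hcover : closedBall x ε ×ˢ (closedBall x ε)ᶜ ⊆
      {w : Y × Y | η ≤ dist w.1 w.2} ∪ Prod.snd ⁻¹' (closedBall x (ε + η) \ closedBall x ε) := by
    rintro ⟨y, z⟩ ⟨hy, hz⟩
    by_cases hyz : η ≤ dist y z
    · exact Or.inl hyz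
    · refine Or.inr ⟨?_, hz⟩
      have := dist_triangle z y x
      rw [mem_closedBall, dist_comm y z] at *
      linarith
  have hmarkov : μ.real {w : Y × Y | η ≤ dist w.1 w.2} ≤ (∫ w, dist w.1 w.2 ∂μ) / η := by
    rw [le_div_iff₀ hη, mul_comm]
    exact mul_meas_ge_le_integral_of_nonneg (ae_of_all _ fun _ => dist_nonneg)
      (integrable_of_continuous_of_compactSpace continuous_dist) η
  have hannulus : μ.real (Prod.snd ⁻¹' (closedBall x (ε + η) \ closedBall x ε)) =
      β.real (closedBall x (ε + η)) - β.real (closedBall x ε) := by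
    rw [← map_measureReal_apply measurable_snd
      (measurableSet_closedBall.diff measurableSet_closedBall), hμβ,
      measureReal_sdiff (closedBall_subset_closedBall (by linarith)) measurableSet_closedBall]
  calc μ.real (closedBall x ε ×ˢ (closedBall x ε)ᶜ)
      ≤ μ.real {w : Y × Y | η ≤ dist w.1 w.2} +
          μ.real (Prod.snd ⁻¹' (closedBall x (ε + η) \ closedBall x ε)) :=
        (measureReal_mono hcover).trans (measureReal_union_le _ _)
    _ ≤ _ := by rw [hannulus]; linarith

variable [CompleteSpace E]

lemma integral_localTrunc_sub_eq [IsFiniteMeasure α] {u : Y → E} (hu : Continuous u) {ε : ℝ}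
    {x : Y} (h0 : α (closedBall x ε) ≠ 0) :
    ∫ y, u y ∂localTrunc α ε x - u x =
      (α.real (closedBall x ε))⁻¹ • ∫ y in closedBall x ε, (u y - u x) ∂α := by
  have hp : α.real (closedBall x ε) ≠ 0 := (measureReal_ne_zero_iff).2 h0
  rw [integral_localTrunc, integral_sub (integrable_of_continuous_of_compactSpace hu).integrableOn
    (integrable_const _), setIntegral_const, smul_sub, inv_smul_smul₀ hp]

lemma norm_integral_localTrunc_sub_le [IsFiniteMeasure α] {u : Y → E} (hu : LipschitzWith 1 u)
    {ε : ℝ} {x : Y} (h0 : α (closedBall x ε) ≠ 0) :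
    ‖∫ y, u y ∂localTrunc α ε x - u x‖ ≤ ε := by
  have hp : 0 < α.real (closedBall x ε) :=
    measureReal_nonneg.lt_of_ne' ((measureReal_ne_zero_iff).2 h0)
  rw [integral_localTrunc_sub_eq hu.continuous h0, norm_smul, norm_inv,
    Real.norm_of_nonneg hp.le, inv_mul_le_iff₀ hp, mul_comm]
  exact norm_setIntegral_le_of_norm_le_const (measure_lt_top _ _) fun y hy =>
    hu.norm_sub_le_of_mem_closedBall hy

lemma norm_integral_localTrunc_sub_integral_localTrunc_le [IsFiniteMeasure α] [IsFiniteMeasure β]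
    {u : Y → E} (hu : LipschitzWith 1 u) {ε : ℝ} {x : Y} (hα : α (closedBall x ε) ≠ 0)
    (hβ : β (closedBall x ε) ≠ 0) :
    ‖∫ y, u y ∂localTrunc α ε x - ∫ y, u y ∂localTrunc β ε x‖ ≤ 2 * ε := by
  rw [← sub_sub_sub_cancel_right _ _ (u x), two_mul]
  exact norm_sub_le_of_le (norm_integral_localTrunc_sub_le hu hα)
    (norm_integral_localTrunc_sub_le hu hβ)

lemma norm_integral_localTrunc_sub_le_of_coupling [IsProbabilityMeasure α] [IsProbabilityMeasure β]
    (hμα : μ.map Prod.fst = α) (hμβ : μ.map Prod.snd = β) {u : Y → E} (hu : LipschitzWith 1 u)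
    (x : Y) {ε η ψ t : ℝ} (hε : 0 ≤ ε) (hη : 0 < η) (hψ : 0 < ψ)
    (hψα : ψ ≤ α.real (closedBall x ε)) (hψβ : ψ ≤ β.real (closedBall x ε))
    (htα : α.real (closedBall x (ε + η)) ≤ t * α.real (closedBall x ε))
    (htβ : β.real (closedBall x (ε + η)) ≤ t * β.real (closedBall x ε)) :
    ‖∫ y, u y ∂localTrunc α ε x - ∫ y, u y ∂localTrunc β ε x‖ ≤
      (∫ w, dist w.1 w.2 ∂μ) * (1 + 2 * ε / η) / ψ + 2 * ε * (t - 1) := by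
  wlog hqp : β.real (closedBall x ε) ≤ α.real (closedBall x ε) generalizing α β μ
  · have hswap : ∫ w, dist w.1 w.2 ∂μ.map Prod.swap = ∫ w, dist w.1 w.2 ∂μ := by
      rw [integral_map measurable_swap.aemeasurable continuous_dist.aestronglyMeasurable]
      simp_rw [Prod.fst_swap, Prod.snd_swap, dist_comm]
    rw [norm_sub_rev, ← hswap]
    refine this ?_ ?_ hψβ hψα htβ htα (not_le.1 hqp).le
    · rwa [Measure.map_map measurable_fst measurable_swap]
    · rwa [Measure.map_map measurable_snd measurable_swap]
  have : IsProbabilityMeasure μ := by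
    subst hμα
    exact Measure.isProbabilityMeasure_of_map Prod.fst
  have hmass := measureReal_closedBall_prod_compl_le hμβ x hη (ε := ε)
  set B := closedBall x ε
  set W := ∫ w, dist w.1 w.2 ∂μ
  have hp0 : 0 < α.real B := hψ.trans_le hψα
  have hq0 : 0 < β.real B := hψ.trans_le hψβ
  have hW : 0 ≤ W := integral_nonneg fun _ => dist_nonneg
  have ht : 1 ≤ t := by
    have : β.real B ≤ β.real (closedBall x (ε + η)) :=
      measureReal_mono (closedBall_subset_closedBall (by linarith))
    nlinarith
  have hf : LipschitzWith 1 (fun y => u y - u x) := LipschitzWith.of_dist_le_mul fun y z => by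
    simpa [dist_sub_right] using hu.dist_le_mul y z
  rw [← sub_sub_sub_cancel_right _ _ (u x),
    integral_localTrunc_sub_eq hu.continuous ((measureReal_ne_zero_iff).1 hp0.ne'),
    integral_localTrunc_sub_eq hu.continuous ((measureReal_ne_zero_iff).1 hq0.ne')]
  calc _ ≤ (W + 2 * ε * μ.real (B ×ˢ Bᶜ)) / α.real B :=
        norm_inv_smul_setIntegral_sub_le_of_coupling hμα hμβ hf measurableSet_closedBall
          (fun _ => hu.norm_sub_le_of_mem_closedBall) hq0 hqp
    _ ≤ (W + 2 * ε * (W / η + (t - 1) * α.real B)) / α.real B := by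
        gcongr
        nlinarith
    _ = W * (1 + 2 * ε / η) / α.real B + 2 * ε * (t - 1) := by
        field_simp
        ring
    _ ≤ W * (1 + 2 * ε / η) / ψ + 2 * ε * (t - 1) := by
        gcongr

lemma norm_integral_localTrunc_sub_le_wassersteinDist [IsProbabilityMeasure α]
    [IsProbabilityMeasure β] {u : Y → E} (hu : LipschitzWith 1 u)
    (x : Y) {ε η ψ t : ℝ} (hε : 0 ≤ ε) (hη : 0 < η) (hψ : 0 < ψ)
    (hψα : ψ ≤ α.real (closedBall x ε)) (hψβ : ψ ≤ β.real (closedBall x ε))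
    (htα : α.real (closedBall x (ε + η)) ≤ t * α.real (closedBall x ε))
    (htβ : β.real (closedBall x (ε + η)) ≤ t * β.real (closedBall x ε)) :
    ‖∫ y, u y ∂localTrunc α ε x - ∫ y, u y ∂localTrunc β ε x‖ ≤
      wassersteinDist α β * (1 + 2 * ε / η) / ψ + 2 * ε * (t - 1) := by
  have hc : 0 < (1 + 2 * ε / η) / ψ := by positivity
  have hW := le_wassersteinDist (α := α) (β := β)
    (c := (‖∫ y, u y ∂localTrunc α ε x - ∫ y, u y ∂localTrunc β ε x‖ - 2 * ε * (t - 1)) /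
      ((1 + 2 * ε / η) / ψ)) fun μ hμα hμβ => by
    rw [div_le_iff₀ hc, ← mul_div_assoc, sub_le_iff_le_add]
    exact norm_integral_localTrunc_sub_le_of_coupling hμα hμβ hu x hε hη hψ hψα hψβ htα htβ
  rwa [div_le_iff₀ hc, ← mul_div_assoc, sub_le_iff_le_add] at hW

end Coupling

section Doubling

variable {Y : Type*} [PseudoMetricSpace Y] [MeasurableSpace Y] {α : Measure Y} {Λ : ℝ}

lemma psiLD_pos (Λ : ℝ) {D ε : ℝ} (hD : 0 < D) (hε : 0 < ε) : 0 < psiLD Λ D ε :=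
  lt_min one_pos (Real.rpow_pos_of_pos (div_pos hε hD) Λ)

lemma psiLD_le_measureReal_closedBall_s2 [IsProbabilityMeasure α] {D ε : ℝ} (hD : 0 < D)
    (hε : 0 < ε) (hdiam : ∀ y z : Y, dist y z ≤ D) (hα : DoublingCond α Λ) {x : Y}
    (hx : x ∈ msupport α) :
    psiLD Λ D ε ≤ α.real (closedBall x ε) := by
  rcases le_or_gt D ε with hDε | hεD
  · have : closedBall x ε = univ :=
      eq_univ_of_forall fun y => mem_closedBall.2 ((hdiam y x).trans hDε)
    rw [this, probReal_univ]
    exact min_le_left _ _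
  · have h := hα x hx D ε hεD.le hε
    have hD_univ : closedBall x D = univ := eq_univ_of_forall fun y => mem_closedBall.2 (hdiam y x)
    rw [hD_univ, measure_univ, ENNReal.div_le_iff_le_mul (Or.inr ENNReal.ofReal_ne_top)
      (Or.inl (measure_ne_top _ _))] at h
    have h' := ENNReal.toReal_mono (by finiteness) h
    rw [ENNReal.toReal_mul, ENNReal.toReal_ofReal (by positivity), ENNReal.toReal_one] at h'
    calc psiLD Λ D ε ≤ (ε / D) ^ Λ := min_le_right _ _
      _ = ((D / ε) ^ Λ)⁻¹ := by rw [← Real.inv_rpow (by positivity), inv_div]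
      _ ≤ α.real (closedBall x ε) := by
        rw [inv_le_iff_one_le_mul₀' (by positivity)]
        exact h'

lemma measureReal_closedBall_add_le [IsFiniteMeasure α] {ε η : ℝ} (hε : 0 < ε) (hη : 0 ≤ η)
    (hα : DoublingCond α Λ) {x : Y} (hx : x ∈ msupport α) :
    α.real (closedBall x (ε + η)) ≤ (1 + η / ε) ^ Λ * α.real (closedBall x ε) := by
  have h := hα x hx (ε + η) ε (by linarith) hε
  rw [ENNReal.div_le_iff_le_mul (Or.inr ENNReal.ofReal_ne_top) (Or.inl (measure_ne_top _ _))] at h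
  have h' := ENNReal.toReal_mono (by finiteness) h
  rwa [ENNReal.toReal_mul, ENNReal.toReal_ofReal (by positivity), add_div,
    div_self hε.ne'] at h'

end Doubling

lemma le_one_add_two_mul_PhiLDE {Λ D ε W δ : ℝ} (hΛ : 0 ≤ Λ) (hε : 0 < ε)
    (hψ : 0 < psiLD Λ D ε) (hW : 0 ≤ W) (hδε : δ ≤ 2 * ε)
    (hδ : ∀ η > 0, δ ≤ W * (1 + 2 * ε / η) / psiLD Λ D ε + 2 * ε * ((1 + η / ε) ^ Λ - 1)) :
    δ ≤ (1 + 2 * ε) * PhiLDE Λ D ε (√W) := by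
  set ψ := psiLD Λ D ε
  set η := √W
  have hη : 0 ≤ η := Real.sqrt_nonneg W
  have hWη : W = η * η := (Real.mul_self_sqrt hW).symm
  have hφ : 0 ≤ (1 + η / ε) ^ Λ - 1 :=
    sub_nonneg.2 (Real.one_le_rpow (le_add_of_nonneg_right (by positivity)) hΛ)
  rw [PhiLDE]
  rcases le_or_gt η 1 with hη1 | hη1
  · have hφcont : Continuous fun η' : ℝ => (1 + 2 * ε) * η / ψ + 2 * ε * ((1 + η' / ε) ^ Λ - 1) :=
      by fun_prop (disch := exact fun _ => Or.inr hΛ)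
    have hlim : δ ≤ (1 + 2 * ε) * η / ψ + 2 * ε * ((1 + η / ε) ^ Λ - 1) := by
      refine ge_of_tendsto ((hφcont.tendsto η).mono_left (nhdsWithin_le_nhds (s := Ioi η)))
        (eventually_nhdsWithin_of_forall fun η' hη' => (hδ η' (hη.trans_lt hη')).trans ?_)
      have hη'0 : 0 < η' := hη.trans_lt hη'
      have : W * (1 + 2 * ε / η') ≤ (1 + 2 * ε) * η := by
        have : η * η / η' ≤ η := by rw [div_le_iff₀ hη'0]; nlinarith [mem_Ioi.1 hη']
        calc W * (1 + 2 * ε / η') = η * η + 2 * ε * (η * η / η') := by rw [hWη]; ring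
          _ ≤ η + 2 * ε * η := by gcongr; nlinarith
          _ = (1 + 2 * ε) * η := by ring
      gcongr
    calc δ ≤ _ := hlim
      _ ≤ (1 + 2 * ε) * (η / ψ + ((1 + η / ε) ^ Λ - 1)) := by
        rw [mul_div_assoc, mul_add]
        gcongr
        linarith
  · have : 1 ≤ η / ψ := by
      rw [le_div_iff₀ hψ]
      exact (mul_le_of_le_one_right zero_le_one (min_le_left _ _)).trans hη1.le
    nlinarith

/-- **Stability of mean shift for local truncations** (Theorem 5 of the paper).
For a compact subset X of ℝⁿ with diam(X) < D and fully supported Λ-doubling Borel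
probability measures α, β on X, the barycenters of the ε-local truncations satisfy
`‖mean(m_α^{(ε)}(x)) − mean(m_β^{(ε)}(x))‖ ≤ (1+2ε) Φ_{Λ,D,ε}(√(d_{W,1}(α,β)))` for all x. -/
theorem stability_of_mean_shift
    {n : ℕ} (X : Set (EuclideanSpace ℝ (Fin n))) (hX : IsCompact X)
    (D Λ ε : ℝ) (hD : Metric.diam X < D) (hΛ : 0 < Λ) (hε : 0 < ε)
    (α β : Measure ↥X) [IsProbabilityMeasure α] [IsProbabilityMeasure β]
    (hαfull : msupport α = Set.univ) (hβfull : msupport β = Set.univ)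
    (hα : DoublingCond α Λ) (hβ : DoublingCond β Λ) :
    ∀ x : ↥X,
      ‖(∫ y, (y : EuclideanSpace ℝ (Fin n)) ∂(localTrunc α ε x)) -
        ∫ y, (y : EuclideanSpace ℝ (Fin n)) ∂(localTrunc β ε x)‖ ≤
      (1 + 2 * ε) * PhiLDE Λ D ε (Real.sqrt (wassersteinDist α β)) := by
  intro x
  have : CompactSpace X := isCompact_iff_compactSpace.mp hX
  have hu : LipschitzWith 1 (fun y : X => (y : EuclideanSpace ℝ (Fin n))) :=
    isometry_subtype_coe.lipschitz
  have hD0 : 0 < D := diam_nonneg.trans_lt hD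
  have hdiam : ∀ y z : X, dist y z ≤ D := fun y z =>
    (dist_le_diam_of_mem hX.isBounded y.2 z.2).trans hD.le
  have hxα : x ∈ msupport α := hαfull ▸ mem_univ x
  have hxβ : x ∈ msupport β := hβfull ▸ mem_univ x
  have hψ := psiLD_pos Λ hD0 hε
  have hψα := psiLD_le_measureReal_closedBall_s2 hD0 hε hdiam hα hxα
  have hψβ := psiLD_le_measureReal_closedBall_s2 hD0 hε hdiam hβ hxβ
  refine le_one_add_two_mul_PhiLDE hΛ.le hε hψ (wassersteinDist_nonneg α β) ?_ fun η hη => ?_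
  · exact norm_integral_localTrunc_sub_integral_localTrunc_le hu
      ((measureReal_ne_zero_iff).1 (hψ.trans_le hψα).ne')
      ((measureReal_ne_zero_iff).1 (hψ.trans_le hψβ).ne')
  · exact norm_integral_localTrunc_sub_le_wassersteinDist hu x hε.le hη hψ hψα hψβ
      (measureReal_closedBall_add_le hε hη.le hα hxα)
      (measureReal_closedBall_add_le hε hη.le hβ hxβ)
end

section
/- Let α, β be fully supported Borel probability measures on a compact metric space (X,d), let ε > 0, let x ∈ X, and suppose β(B_ε(x)) ≤ α(B_ε(x)), diam(X) < D, and both α and β satisfy the Λ-doubling condition. If η > 0 satisfies d_P(α,β) < η, then for every Borel set A ⊂ X, m_α^{(ε)}(x)(A) ≤ m_β^{(ε)}(x)(A^η) + ξ, where ξ = η/min(1,(ε/D)^Λ) + ((1+η/ε)^Λ − 1) and A^η is the set of points at distance less than η from A. -/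
open MeasureTheory Metric Set Filter

/-! Apply the Prokhorov bound to `A ∩ B_ε(x)`: its `η`-thickening lies in `A^η ∩ B_ε(x)` up to the
annulus `B_{ε+η}(x) \ B_ε(x)`. Dividing by `α(B_ε(x)) ≥ β(B_ε(x))`, the first piece gives
`m_β^{(ε)}(x)(A^η)`, doubling bounds the relative `β`-mass of the annulus by `(1+η/ε)^Λ - 1`, and
doubling between `B_ε(x)` and a ball of radius `D` covering `X` gives `α(B_ε(x)) ≥ min(1,(ε/D)^Λ)`,
which controls `η / α(B_ε(x))`. -/

lemma measure_le_measure_thickening_add_of_prokhorovDist_lt {X : Type*} [MeasurableSpace X]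
    [PseudoMetricSpace X] {α β : Measure X} [IsProbabilityMeasure α] {η : ℝ}
    (hP : prokhorovDist α β < η) (A : Set X) :
    α A ≤ β (thickening η A) + ENNReal.ofReal η := by
  have hne : {δ : ℝ | 0 < δ ∧ ∀ A : Set X,
      α A ≤ β (thickening δ A) + ENNReal.ofReal δ}.Nonempty :=
    ⟨1, one_pos, fun A => prob_le_one.trans (by simp)⟩
  obtain ⟨δ, ⟨-, hδ⟩, hδη⟩ := exists_lt_of_csInf_lt hne hP
  calc α A ≤ β (thickening δ A) + ENNReal.ofReal δ := hδ A
    _ ≤ β (thickening η A) + ENNReal.ofReal η := by gcongr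

lemma localTrunc_apply {X : Type*} [MeasurableSpace X] [PseudoMetricSpace X]
    [OpensMeasurableSpace X] (α : Measure X) (ε : ℝ) (x : X) (A : Set X) :
    localTrunc α ε x A = (α (closedBall x ε))⁻¹ * α (A ∩ closedBall x ε) := by
  rw [localTrunc, Measure.smul_apply, Measure.restrict_apply' measurableSet_closedBall,
    smul_eq_mul]

lemma thickening_inter_closedBall_subset {X : Type*} [PseudoMetricSpace X] (A : Set X) (x : X)
    (ε η : ℝ) :
    thickening η (A ∩ closedBall x ε) ⊆
      thickening η A ∩ closedBall x ε ∪ closedBall x (ε + η) \ closedBall x ε := by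
  rintro y hy
  obtain ⟨z, ⟨hzA, hzx⟩, hyz⟩ := mem_thickening_iff.mp hy
  have hyA : y ∈ thickening η A := mem_thickening_iff.mpr ⟨z, hzA, hyz⟩
  have hyx : dist y x ≤ ε + η := by
    linarith [dist_triangle y z x, mem_closedBall.mp hzx]
  by_cases hyB : y ∈ closedBall x ε
  exacts [.inl ⟨hyA, hyB⟩, .inr ⟨mem_closedBall.mpr hyx, hyB⟩]

lemma measure_inter_closedBall_le_of_prokhorovDist_lt {X : Type*} [MeasurableSpace X]
    [PseudoMetricSpace X] {α β : Measure X} [IsProbabilityMeasure α] {η : ℝ}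
    (hP : prokhorovDist α β < η) (A : Set X) (x : X) (ε : ℝ) :
    α (A ∩ closedBall x ε) ≤ β (thickening η A ∩ closedBall x ε) +
      β (closedBall x (ε + η) \ closedBall x ε) + ENNReal.ofReal η :=
  calc α (A ∩ closedBall x ε) ≤ β (thickening η (A ∩ closedBall x ε)) + ENNReal.ofReal η :=
        measure_le_measure_thickening_add_of_prokhorovDist_lt hP _
    _ ≤ _ := by
        gcongr
        exact (measure_mono (thickening_inter_closedBall_subset A x ε η)).trans
          (measure_union_le _ _)

section Doubling

variable {X : Type*} [MeasurableSpace X] [PseudoMetricSpace X] {α : Measure X} {Λ : ℝ}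
  {x : X}

lemma DoublingCond.measure_closedBall_le_mul (hα : DoublingCond α Λ) (hx : x ∈ msupport α)
    {r₁ r₂ : ℝ} (hr₂ : 0 < r₂) (hr : r₂ ≤ r₁) :
    α (closedBall x r₁) ≤ ENNReal.ofReal ((r₁ / r₂) ^ Λ) * α (closedBall x r₂) := by
  have hpos : 0 < (r₁ / r₂) ^ Λ := Real.rpow_pos_of_pos (div_pos (hr₂.trans_le hr) hr₂) Λ
  exact (ENNReal.div_le_iff_le_mul (.inr ENNReal.ofReal_ne_top)
    (.inr (ENNReal.ofReal_pos.mpr hpos).ne')).mp (hα x hx r₁ r₂ hr hr₂)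

lemma DoublingCond.ofReal_psiLD_le_measure_closedBall [IsProbabilityMeasure α]
    (hα : DoublingCond α Λ) (hx : x ∈ msupport α) {D ε : ℝ} (hε : 0 < ε)
    (hD : closedBall x D = univ) :
    ENNReal.ofReal (psiLD Λ D ε) ≤ α (closedBall x ε) := by
  rcases le_or_gt ε D with hεD | hDε
  · have hD₀ : 0 < D := hε.trans_le hεD
    have hcover : 1 ≤ ENNReal.ofReal ((D / ε) ^ Λ) * α (closedBall x ε) := by
      simpa [hD] using hα.measure_closedBall_le_mul hx hε hεD
    have hinv : (ε / D) ^ Λ * (D / ε) ^ Λ = 1 := by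
      rw [← Real.mul_rpow (by positivity) (by positivity),
        show ε / D * (D / ε) = 1 by field_simp, Real.one_rpow]
    calc ENNReal.ofReal (psiLD Λ D ε) ≤ ENNReal.ofReal ((ε / D) ^ Λ) * 1 := by
          rw [mul_one]; exact ENNReal.ofReal_le_ofReal (min_le_right _ _)
      _ ≤ ENNReal.ofReal ((ε / D) ^ Λ) * (ENNReal.ofReal ((D / ε) ^ Λ) * α (closedBall x ε)) := by
          gcongr
      _ = α (closedBall x ε) := by
          rw [← mul_assoc, ← ENNReal.ofReal_mul (by positivity), hinv, ENNReal.ofReal_one, one_mul]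
  · have hball : closedBall x ε = univ :=
      eq_univ_of_univ_subset (hD ▸ closedBall_subset_closedBall hDε.le)
    rw [hball, measure_univ]
    exact ENNReal.ofReal_le_one.mpr (min_le_left _ _)

lemma DoublingCond.inv_mul_measure_closedBall_add_diff_le [IsFiniteMeasure α]
    [OpensMeasurableSpace X] (hα : DoublingCond α Λ) (hx : x ∈ msupport α) {ε η : ℝ}
    (hε : 0 < ε) (hη : 0 ≤ η) :
    (α (closedBall x ε))⁻¹ * α (closedBall x (ε + η) \ closedBall x ε) ≤
      ENNReal.ofReal ((1 + η / ε) ^ Λ - 1) := by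
  have hgrow := hα.measure_closedBall_le_mul hx hε (le_add_of_nonneg_right hη)
  rw [add_div, div_self hε.ne'] at hgrow
  have hannulus : α (closedBall x (ε + η) \ closedBall x ε) ≤
      α (closedBall x ε) * ENNReal.ofReal ((1 + η / ε) ^ Λ - 1) := by
    rw [measure_sdiff (closedBall_subset_closedBall (le_add_of_nonneg_right hη))
        measurableSet_closedBall.nullMeasurableSet (measure_ne_top _ _),
      ENNReal.ofReal_sub _ zero_le_one, ENNReal.ofReal_one,
      mul_comm, ENNReal.sub_mul fun _ _ => measure_ne_top _ _, one_mul]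
    exact tsub_le_tsub_right hgrow _
  calc _ ≤ (α (closedBall x ε))⁻¹ *
        (α (closedBall x ε) * ENNReal.ofReal ((1 + η / ε) ^ Λ - 1)) := by gcongr
    _ = _ := ENNReal.inv_mul_cancel_left (hx _ (closedBall_mem_nhds x hε)).ne'
        (measure_ne_top _ _)

end Doubling

theorem local_truncation_prokhorov_inequality_general
    {X : Type*} [MetricSpace X] [CompactSpace X] [MeasurableSpace X] [BorelSpace X]
    (D Λ ε : ℝ) (hD : Metric.diam (Set.univ : Set X) < D) (hΛ : 0 < Λ) (hε : 0 < ε)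
    (α β : Measure X) [IsProbabilityMeasure α] [IsProbabilityMeasure β]
    (hαfull : msupport α = Set.univ) (hβfull : msupport β = Set.univ)
    (hα : DoublingCond α Λ) (hβ : DoublingCond β Λ)
    (x : X) (hballs : β (closedBall x ε) ≤ α (closedBall x ε))
    (η : ℝ) (hη : 0 < η) (hP : prokhorovDist α β < η)
    (A : Set X) :
    localTrunc α ε x A ≤ localTrunc β ε x (thickening η A) +
      ENNReal.ofReal (η / min 1 ((ε / D) ^ Λ) + ((1 + η / ε) ^ Λ - 1)) := by
  set B := closedBall x ε
  have hxα : x ∈ msupport α := hαfull ▸ mem_univ x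
  have hxβ : x ∈ msupport β := hβfull ▸ mem_univ x
  have hcover : closedBall x D = univ := eq_univ_of_forall fun y => mem_closedBall.mpr
    ((dist_le_diam_of_mem isCompact_univ.isBounded trivial trivial).trans hD.le)
  have hψ : 0 < psiLD Λ D ε :=
    lt_min one_pos (Real.rpow_pos_of_pos (div_pos hε (diam_nonneg.trans_lt hD)) Λ)
  have hscale : (α B)⁻¹ * ENNReal.ofReal η ≤ ENNReal.ofReal (η / psiLD Λ D ε) := by
    rw [← ENNReal.div_eq_inv_mul, ENNReal.ofReal_div_of_pos hψ]
    exact ENNReal.div_le_div_left (hα.ofReal_psiLD_le_measure_closedBall hxα hε hcover) _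
  have hgrowth : 0 ≤ (1 + η / ε) ^ Λ - 1 :=
    sub_nonneg.mpr (Real.one_le_rpow (by linarith [div_pos hη hε]) hΛ.le)
  rw [localTrunc_apply, localTrunc_apply]
  calc (α B)⁻¹ * α (A ∩ B)
      ≤ (α B)⁻¹ * β (thickening η A ∩ B) + (α B)⁻¹ * β (closedBall x (ε + η) \ B)
          + (α B)⁻¹ * ENNReal.ofReal η := by
        rw [← mul_add, ← mul_add]
        gcongr
        exact measure_inter_closedBall_le_of_prokhorovDist_lt hP A x ε
    _ ≤ (β B)⁻¹ * β (thickening η A ∩ B) + ENNReal.ofReal ((1 + η / ε) ^ Λ - 1)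
          + ENNReal.ofReal (η / psiLD Λ D ε) := by
        have hinv : (α B)⁻¹ ≤ (β B)⁻¹ := ENNReal.inv_le_inv.mpr hballs
        gcongr
        exact (mul_le_mul_left hinv _).trans
          (hβ.inv_mul_measure_closedBall_add_diff_le hxβ hε hη.le)
    _ = (β B)⁻¹ * β (thickening η A ∩ B) + ENNReal.ofReal (PhiLDE Λ D ε η) := by
        rw [add_assoc, add_comm (ENNReal.ofReal _), ← ENNReal.ofReal_add (by positivity) hgrowth,
          PhiLDE]

/-- The key inequality in the proof of Claim 1 of the paper: if `d_P(α,β) < η` and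
`β(B_ε(x)) ≤ α(B_ε(x))`, then for every Borel set A,
`m_α^{(ε)}(x)(A) ≤ m_β^{(ε)}(x)(A^η) + ξ` where
`ξ = η/min(1,(ε/D)^Λ) + ((1+η/ε)^Λ − 1)`. -/
theorem local_truncation_prokhorov_inequality
    {X : Type*} [MetricSpace X] [CompactSpace X] [MeasurableSpace X] [BorelSpace X]
    (D Λ ε : ℝ) (hD : Metric.diam (Set.univ : Set X) < D) (hΛ : 0 < Λ) (hε : 0 < ε)
    (α β : Measure X) [IsProbabilityMeasure α] [IsProbabilityMeasure β]
    (hαfull : msupport α = Set.univ) (hβfull : msupport β = Set.univ)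
    (hα : DoublingCond α Λ) (hβ : DoublingCond β Λ)
    (x : X) (hballs : β (closedBall x ε) ≤ α (closedBall x ε))
    (η : ℝ) (hη : 0 < η) (hP : prokhorovDist α β < η)
    (A : Set X) (hA : MeasurableSet A) :
    localTrunc α ε x A ≤ localTrunc β ε x (thickening η A) +
      ENNReal.ofReal (η / min 1 ((ε / D) ^ Λ) + ((1 + η / ε) ^ Λ - 1)) :=
  local_truncation_prokhorov_inequality_general D Λ ε hD hΛ hε α β hαfull hβfull hα hβ x hballs η hη
    hP A
end

section
/- Let α be a probability measure on ℝ with a twice continuously differentiable density f, and let x ∈ ℝ with f(x) ≠ 0. Define H(x) = (∫_{x−ε}^{x+ε} ∫_{x−ε}^{t} f(s) ds dt) / (∫_{x−ε}^{x+ε} f(s) ds). Then as ε → 0, H(x) = ε − (f'(x)/(3 f(x)))·ε² + O(ε³). -/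
/-!
Integrating by parts, `∫_{x-ε}^{x+ε} ∫_{x-ε}^t f = ε D(ε) - m(ε)` with
`D(ε) = ∫_{x-ε}^{x+ε} f` and `m(ε) = ∫_{x-ε}^{x+ε} (s - x) f(s) ds`, so `H(ε) - ε = -m(ε) / D(ε)`.
Inserting the first-order Taylor expansion `f(s) = f(x) + f'(x)(s - x) + O((s - x)²)` gives
`D(ε) = 2 f(x) ε + O(ε³)` and `m(ε) = (2/3) f'(x) ε³ + O(ε⁴)`, hence
`m(ε) / D(ε) = f'(x) ε² / (3 f(x)) + O(ε³)`.
-/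

open MeasureTheory Set Filter Asymptotics intervalIntegral Topology

theorem ContDiff.isBigO_sub_taylor_one {f : ℝ → ℝ} (hf : ContDiff ℝ 2 f) (x : ℝ) :
    (fun s => f s - (f x + deriv f x * (s - x))) =O[𝓝 x] fun s => (s - x) ^ 2 := by
  have hT : ∀ s, taylorWithinEval f 2 univ x s =
      f x + deriv f x * (s - x) + iteratedDeriv 2 f x / 2 * (s - x) ^ 2 := by
    intro s
    simp [taylor_within_apply, iteratedDerivWithin_univ]
    ring
  refine ((taylor_isLittleO_univ hf).isBigO.add
    (isBigO_const_mul_self (iteratedDeriv 2 f x / 2) (fun s => (s - x) ^ 2) _)).congr_left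
    fun s => ?_
  simp only [hT]
  ring

theorem integral_integral_eq_integral_sub_mul {f : ℝ → ℝ} (hf : Continuous f) (a b : ℝ) :
    ∫ t in a..b, ∫ s in a..t, f s = ∫ s in a..b, (b - s) * f s := by
  have hparts := integral_mul_deriv_eq_deriv_mul (a := a) (b := b)
    (u := fun t => ∫ s in a..t, f s) (v := fun t => t - b) (u' := f) (v' := fun _ => 1)
    (fun t _ => integral_hasDerivAt_right (hf.intervalIntegrable _ _)
      hf.aestronglyMeasurable.stronglyMeasurableAtFilter hf.continuousAt)
    (fun t _ => (hasDerivAt_id t).sub_const b) (hf.intervalIntegrable _ _) intervalIntegrable_const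
  simp only [mul_one, sub_self, mul_zero, integral_same, zero_mul] at hparts
  rw [hparts, zero_sub, ← intervalIntegral.integral_neg]
  congr 1 with s
  ring

theorem integral_integral_centered {f : ℝ → ℝ} (hf : Continuous f) (x ε : ℝ) :
    ∫ t in (x - ε)..(x + ε), ∫ s in (x - ε)..t, f s =
      ε * (∫ s in (x - ε)..(x + ε), f s) - ∫ s in (x - ε)..(x + ε), (s - x) * f s := by
  rw [integral_integral_eq_integral_sub_mul hf, ← intervalIntegral.integral_const_mul,
    ← intervalIntegral.integral_sub (by apply Continuous.intervalIntegrable; fun_prop)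
      (by apply Continuous.intervalIntegrable; fun_prop)]
  congr 1 with s
  ring

theorem Asymptotics.IsBigO.integral_centered_interval {E : Type*} [NormedAddCommGroup E]
    [NormedSpace ℝ E] {g : ℝ → E} {x : ℝ} {n : ℕ} (h : g =O[𝓝 x] fun s => (s - x) ^ n) :
    (fun ε => ∫ s in (x - ε)..(x + ε), g s) =O[𝓝 0] fun ε => ε ^ (n + 1) := by
  obtain ⟨c, hc0, hc⟩ := h.exists_nonneg
  obtain ⟨δ, hδ, hgδ⟩ := Metric.eventually_nhds_iff.mp hc.bound
  refine IsBigO.of_bound (2 * c) ?_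
  filter_upwards [Metric.ball_mem_nhds 0 hδ] with ε hε
  rw [Metric.mem_ball, dist_zero_right, Real.norm_eq_abs] at hε
  have hbound : ∀ s ∈ uIoc (x - ε) (x + ε), ‖g s‖ ≤ c * |ε| ^ n := by
    intro s hs
    have hsx : |s - x| ≤ |ε| := by
      rw [abs_le]
      rcases mem_uIoc.mp hs with ⟨h₁, h₂⟩ | ⟨h₁, h₂⟩ <;> constructor <;>
        linarith [le_abs_self ε, neg_abs_le ε]
    calc ‖g s‖ ≤ c * ‖(s - x) ^ n‖ := hgδ (by rw [Real.dist_eq]; exact hsx.trans_lt hε)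
      _ ≤ c * |ε| ^ n := by rw [norm_pow, Real.norm_eq_abs]; gcongr
  calc ‖∫ s in (x - ε)..(x + ε), g s‖ ≤ c * |ε| ^ n * |x + ε - (x - ε)| :=
        norm_integral_le_of_norm_le_const hbound
    _ = 2 * c * ‖ε ^ (n + 1)‖ := by
        rw [show x + ε - (x - ε) = 2 * ε by ring, abs_mul, norm_pow, Real.norm_eq_abs]
        norm_num; ring

theorem integral_centered_linear (x ε a b : ℝ) :
    ∫ s in (x - ε)..(x + ε), (a + b * (s - x)) = 2 * a * ε := by
  rw [integral_comp_sub_right (fun u => a + b * u) x, intervalIntegral.integral_add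
    intervalIntegrable_const (by apply Continuous.intervalIntegrable; fun_prop),
    intervalIntegral.integral_const_mul, integral_id]
  simp
  ring

theorem integral_centered_mul_linear (x ε a b : ℝ) :
    ∫ s in (x - ε)..(x + ε), (s - x) * (a + b * (s - x)) = 2 / 3 * b * ε ^ 3 := by
  rw [integral_comp_sub_right (fun u => u * (a + b * u)) x]
  simp only [mul_add, mul_left_comm _ b, ← pow_two]
  rw [intervalIntegral.integral_add (by apply Continuous.intervalIntegrable; fun_prop)
    (by apply Continuous.intervalIntegrable; fun_prop)]
  simp
  ring

namespace ContDiff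

variable {f : ℝ → ℝ} (hf : ContDiff ℝ 2 f) (x : ℝ)
include hf

theorem integral_centered_sub :
    (fun ε => (∫ s in (x - ε)..(x + ε), f s) - 2 * f x * ε) =O[𝓝 0] fun ε => ε ^ 3 := by
  refine (hf.isBigO_sub_taylor_one x).integral_centered_interval.congr_left fun ε => ?_
  rw [intervalIntegral.integral_sub (hf.continuous.intervalIntegrable _ _)
    (by apply Continuous.intervalIntegrable; fun_prop), integral_centered_linear]

theorem integral_centered_mul_sub :
    (fun ε => (∫ s in (x - ε)..(x + ε), (s - x) * f s) - 2 / 3 * deriv f x * ε ^ 3)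
      =O[𝓝 0] fun ε => ε ^ 4 := by
  have h : (fun s => (s - x) * (f s - (f x + deriv f x * (s - x)))) =O[𝓝 x]
      fun s => (s - x) ^ 3 :=
    ((isBigO_refl (fun s => s - x) _).mul (hf.isBigO_sub_taylor_one x)).congr_right
      fun s => by ring
  refine h.integral_centered_interval.congr_left fun ε => ?_
  rw [← integral_centered_mul_linear x ε (f x) (deriv f x), ← intervalIntegral.integral_sub
    (by apply Continuous.intervalIntegrable; fun_prop)
    (by apply Continuous.intervalIntegrable; fun_prop)]
  congr 1 with s
  ring

theorem integral_centered_isEquivalent (hfx : f x ≠ 0) :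
    (fun ε => ∫ s in (x - ε)..(x + ε), f s) ~[𝓝 0] fun ε => 2 * f x * ε := by
  have hlin := isBigO_self_const_mul (mul_ne_zero two_ne_zero hfx) (fun ε : ℝ => ε) (𝓝 0)
  have hpow := isLittleO_pow_pow (𝕜 := ℝ) (by norm_num : 1 < 3)
  simp only [pow_one] at hpow
  exact (hf.integral_centered_sub x).trans_isLittleO (hpow.trans_isBigO hlin)

theorem sq_mul_integral_centered_sub_integral_centered_mul (hfx : f x ≠ 0) :
    (fun ε => deriv f x / (3 * f x) * ε ^ 2 * (∫ s in (x - ε)..(x + ε), f s) -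
      ∫ s in (x - ε)..(x + ε), (s - x) * f s) =O[𝓝 0] fun ε => ε ^ 4 := by
  have hpow : (fun ε : ℝ => ε ^ 2 * ε ^ 3) =O[𝓝 0] fun ε => ε ^ 4 :=
    (isLittleO_pow_pow (by norm_num : 4 < 5)).isBigO.congr_left fun ε => by ring
  refine ((((isBigO_const_mul_self (deriv f x / (3 * f x)) _ _).mul
    (hf.integral_centered_sub x)).trans hpow).sub (hf.integral_centered_mul_sub x)).congr_left
    fun ε => ?_
  field_simp
  ring

end ContDiff

theorem H_taylor_expansion_general
    (f : ℝ → ℝ) (hf : ContDiff ℝ 2 f)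
    (x : ℝ) (hfx : f x ≠ 0) :
    (fun ε : ℝ =>
        (∫ t in (x - ε)..(x + ε), ∫ s in (x - ε)..t, f s) /
          (∫ s in (x - ε)..(x + ε), f s) -
        (ε - (deriv f x / (3 * f x)) * ε ^ 2))
      =O[nhdsWithin 0 (Set.Ioi 0)] fun ε : ℝ => ε ^ 3 := by
  simp only [integral_integral_centered hf.continuous]
  set D := fun ε : ℝ => ∫ s in (x - ε)..(x + ε), f s
  set m := fun ε : ℝ => ∫ s in (x - ε)..(x + ε), (s - x) * f s
  set k := deriv f x / (3 * f x)
  have hDequiv : D ~[𝓝[>] 0] fun ε => 2 * f x * ε :=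
    (hf.integral_centered_isEquivalent x hfx).mono nhdsWithin_le_nhds
  have hD0 : ∀ᶠ ε in 𝓝[>] 0, D ε ≠ 0 := by
    filter_upwards [hDequiv.isBigO_symm.eq_zero_imp, self_mem_nhdsWithin]
      with ε himp (hε : 0 < ε) hDε
    exact mul_ne_zero (mul_ne_zero two_ne_zero hfx) hε.ne' (himp hDε)
  have hquot : (fun ε : ℝ => ε ^ 4 * (2 * f x * ε)⁻¹) =O[𝓝[>] 0] fun ε => ε ^ 3 :=
    (isBigO_const_mul_self (2 * f x)⁻¹ _ _).congr' (eventually_mem_nhdsWithin.mono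
      fun ε (hε : 0 < ε) => by field_simp) EventuallyEq.rfl
  have hnum := (hf.sq_mul_integral_centered_sub_integral_centered_mul x hfx).mono
    (nhdsWithin_le_nhds (s := Ioi 0))
  refine ((hnum.mul hDequiv.inv.isBigO).trans hquot).congr' (hD0.mono fun ε hε => ?_)
    EventuallyEq.rfl
  change (k * ε ^ 2 * D ε - m ε) * (D ε)⁻¹ = (ε * D ε - m ε) / D ε - (ε - k * ε ^ 2)
  field_simp
  ring

/-- The Taylor expansion of the quantity `H(x)` in the proof of Remark 4 of the paper:
for a C² probability density f on ℝ and a point x with `f x ≠ 0`,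
`H(x) = (∫_{x−ε}^{x+ε} ∫_{x−ε}^{t} f(s) ds dt) / (∫_{x−ε}^{x+ε} f(s) ds)`
satisfies `H(x) = ε − (f'(x)/(3 f(x))) ε² + O(ε³)` as `ε → 0⁺`. -/
theorem H_taylor_expansion
    (f : ℝ → ℝ) (hf : ContDiff ℝ 2 f) (hf0 : ∀ s, 0 ≤ f s)
    (hprob : ∫ s, f s = 1)
    (x : ℝ) (hfx : f x ≠ 0) :
    (fun ε : ℝ =>
        (∫ t in (x - ε)..(x + ε), ∫ s in (x - ε)..t, f s) /
          (∫ s in (x - ε)..(x + ε), f s) -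
        (ε - (deriv f x / (3 * f x)) * ε ^ 2))
      =O[nhdsWithin 0 (Set.Ioi 0)] fun ε : ℝ => ε ^ 3 :=
  H_taylor_expansion_general f hf x hfx
end
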